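/- arXiv:1107.2350 — 4 statements merged into one kernel-verified Lean document; each statement's English description precedes it below -/
import Mathlib

section
/- Let {ℓ_j : ℝ^d → ℝ^{d_j}}_{1 ≤ j ≤ n} be a rationally commensurate finite collection of surjective linear maps, let P : ℝ^d → ℝ be a polynomial that is NOT nondegenerate with a finite witness relative to {ℓ_j}, and let B ⊂ ℝ^d be a bounded set with nonempty interior. Then there exists c > 0 such that for every ε > 0 there exist measurable functions f_j : ℝ^{d_j} → ℝ with |E_ε(P, f_1, …, f_n)| ≥ c. In particular no bound of the form |E_ε| ≤ Θ(ε) with Θ(ε) → 0 as ε → 0⁺, uniform over all measurable f_j, can hold. -/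
open MeasureTheory Filter

lemma finite_rep {d n : ℕ} {dd : Fin n → ℕ}
    (ℓ : ∀ j : Fin n, (Fin d → ℝ) →ₗ[ℝ] (Fin (dd j) → ℝ))
    (P : MvPolynomial (Fin d) ℝ)
    (hnowit : ¬ ∃ (S : Finset (Fin d → ℝ)) (c : (Fin d → ℝ) → ℝ),
      (∑ s ∈ S, c s * MvPolynomial.eval s P) ≠ 0 ∧
      ∀ (j : Fin n) (f : (Fin (dd j) → ℝ) → ℝ), ∑ s ∈ S, c s * f (ℓ j s) = 0)
    (F : Finset (Fin d → ℝ)) :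
    ∃ f : ∀ j : Fin n, (Fin (dd j) → ℝ) → ℝ,
      ∀ s ∈ F, MvPolynomial.eval s P = ∑ j, f j (ℓ j s) := by
  classical
  let Φ : (∀ j : Fin n, (Fin (dd j) → ℝ) → ℝ) →ₗ[ℝ] ({s // s ∈ F} → ℝ) :=
    { toFun := fun f => fun s => ∑ j, f j (ℓ j s.1)
      map_add' := by
        intro f g; funext s
        simp only [Pi.add_apply, Finset.sum_add_distrib]
      map_smul' := by
        intro r f; funext s
        simp only [Pi.smul_apply, smul_eq_mul, RingHom.id_apply, Finset.mul_sum] }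
  set x : ({s // s ∈ F} → ℝ) := fun s => MvPolynomial.eval s.1 P with hxdef
  by_cases hx : x ∈ LinearMap.range Φ
  · obtain ⟨f, hf⟩ := hx
    refine ⟨f, fun s hs => ?_⟩
    exact (congrFun hf ⟨s, hs⟩).symm
  · exfalso
    set p := LinearMap.range Φ
    have hq : (Submodule.Quotient.mk x : ({s // s ∈ F} → ℝ) ⧸ p) ≠ 0 := by
      simpa [Submodule.Quotient.mk_eq_zero] using hx
    obtain ⟨φ, hφ⟩ : ∃ φ : Module.Dual ℝ (({s // s ∈ F} → ℝ) ⧸ p), φ (Submodule.Quotient.mk x) ≠ 0 := by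
      by_contra h
      push_neg at h
      exact hq ((Module.forall_dual_apply_eq_zero_iff ℝ _).mp h)
    let g : ({s // s ∈ F} → ℝ) →ₗ[ℝ] ℝ := φ.comp p.mkQ
    have hgp : ∀ u ∈ p, g u = 0 := by
      intro u hu
      have : p.mkQ u = 0 := (Submodule.Quotient.mk_eq_zero p).mpr hu
      simp [g, LinearMap.comp_apply, this]
    have hgx : g x ≠ 0 := hφ
    let e : {s // s ∈ F} → ({s // s ∈ F} → ℝ) := fun t => fun t' => if t = t' then 1 else 0
    let c : (Fin d → ℝ) → ℝ := fun s => if h : s ∈ F then g (e ⟨s, h⟩) else 0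
    have key : ∀ u : (Fin d → ℝ) → ℝ,
        ∑ s ∈ F, c s * u s = g (fun t => u t.1) := by
      intro u
      have h1 : g (fun t => u t.1) = ∑ t : {s // s ∈ F}, u t.1 * g (e t) := by
        have hw : (fun t : {s // s ∈ F} => u t.1) = ∑ t : {s // s ∈ F}, u t.1 • e t := by
          exact pi_eq_sum_univ _
        rw [hw, map_sum]
        simp [smul_eq_mul]
      rw [h1, Finset.univ_eq_attach, ← Finset.sum_attach F (fun s => c s * u s)]
      refine Finset.sum_congr rfl fun t _ => ?_
      have : c t.1 = g (e t) := by
        simp only [c]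
        rw [dif_pos t.2]
      rw [this, mul_comm]
    exact hnowit ⟨F, c, by rw [key (fun s => MvPolynomial.eval s P)]; exact hgx,
      fun j f0 => by
        rw [key (fun s => f0 (ℓ j s))]
        refine hgp _ ⟨Pi.single (M := fun j : Fin n => (Fin (dd j) → ℝ) → ℝ) j f0, ?_⟩
        funext t
        show (∑ j', Pi.single (M := fun j : Fin n => (Fin (dd j) → ℝ) → ℝ) j f0 j' (ℓ j' t.1)) = f0 (ℓ j t.1)
        rw [Finset.sum_eq_single j]
        · simp
        · intro b _ hb; rw [Pi.single_eq_of_ne hb]; rfl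
        · simp⟩

set_option maxHeartbeats 2000000 in
/-- Remark 2.1 of the paper. If `{ℓ_j}` is rationally commensurate and the
polynomial `P` fails to be nondegenerate with a finite witness, then no uniform sublevel set
bound can hold: there is `c > 0` such that for each `ε > 0` some choice of measurable functions
`f_j` makes `|E_ε(P, f_1, …, f_n)| ≥ c`. -/
theorem stmt6 (d n : ℕ) (dd : Fin n → ℕ)
    (ℓ : ∀ j : Fin n, (Fin d → ℝ) →ₗ[ℝ] (Fin (dd j) → ℝ))
    (hsurj : ∀ j, Function.Surjective (ℓ j))
    (P : MvPolynomial (Fin d) ℝ)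
    (hrc : ∃ (A : (Fin d → ℝ) ≃ₗ[ℝ] (Fin d → ℝ))
        (Aj : ∀ j : Fin n, (Fin (dd j) → ℝ) ≃ₗ[ℝ] (Fin (dd j) → ℝ)),
      ∀ j, ∃ Mj : Matrix (Fin (dd j)) (Fin d) ℤ,
        ∀ x : Fin d → ℝ, (Aj j).symm (ℓ j (A x)) = (Mj.map fun z => (z : ℝ)).mulVec x)
    (hnowit : ¬ ∃ (S : Finset (Fin d → ℝ)) (c : (Fin d → ℝ) → ℝ),
      (∑ s ∈ S, c s * MvPolynomial.eval s P) ≠ 0 ∧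
      ∀ (j : Fin n) (f : (Fin (dd j) → ℝ) → ℝ), ∑ s ∈ S, c s * f (ℓ j s) = 0)
    (B : Set (Fin d → ℝ)) (hB : Bornology.IsBounded B)
    (hBint : (interior B).Nonempty) :
    ∃ c > (0 : ℝ), ∀ ε > (0 : ℝ),
      ∃ f : ∀ j : Fin n, (Fin (dd j) → ℝ) → ℝ, (∀ j, Measurable (f j)) ∧
        ENNReal.ofReal c ≤
          volume {y ∈ B | |MvPolynomial.eval y P - ∑ j, f j (ℓ j y)| < ε} := by
  classical
  obtain ⟨A, Aj, hAj⟩ := hrc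
  choose M hM using hAj
  -- a ball inside B
  obtain ⟨x0, hx0⟩ := hBint
  obtain ⟨r, hr, hball⟩ : ∃ r > 0, Metric.ball x0 r ⊆ B := by
    obtain ⟨r, hr, h⟩ := Metric.isOpen_iff.mp isOpen_interior x0 hx0
    exact ⟨r, hr, h.trans interior_subset⟩
  obtain ⟨R, hR⟩ := hB.subset_closedBall 0
  -- norm control for A
  set Acl : (Fin d → ℝ) →L[ℝ] (Fin d → ℝ) :=
    LinearMap.toContinuousLinearMap A.toLinearMap with hAcl
  set CA : ℝ := ‖Acl‖ + 1 with hCA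
  have hCApos : 0 < CA := by positivity
  have hCAle : ∀ v : Fin d → ℝ, ‖A v‖ ≤ CA * ‖v‖ := by
    intro v
    have h1 : ‖Acl v‖ ≤ ‖Acl‖ * ‖v‖ := Acl.le_opNorm v
    have h2 : ‖Acl‖ * ‖v‖ ≤ CA * ‖v‖ :=
      mul_le_mul_of_nonneg_right (by simp [hCA]) (norm_nonneg v)
    have h3 : Acl v = A v := rfl
    rw [h3] at h1
    linarith
  -- size of integer matrices
  set Kc : ℝ := 1 + ∑ j : Fin n, ∑ i : Fin (dd j), ∑ k : Fin d, |((M j) i k : ℝ)| with hKc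
  have hKcsum : 0 ≤ ∑ j : Fin n, ∑ i : Fin (dd j), ∑ k : Fin d, |((M j) i k : ℝ)| := by
    positivity
  have hKc1 : 1 ≤ Kc := by simp only [hKc]; linarith
  have hKcpos : 0 < Kc := by linarith
  have hrow : ∀ (j : Fin n) (i : Fin (dd j)), (∑ k : Fin d, |((M j) i k : ℝ)|) ≤ Kc - 1 := by
    intro j i
    have h1 : (∑ k : Fin d, |((M j) i k : ℝ)|)
        ≤ ∑ i' : Fin (dd j), ∑ k : Fin d, |((M j) i' k : ℝ)| :=
      Finset.single_le_sum (f := fun i' => ∑ k : Fin d, |((M j) i' k : ℝ)|)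
        (fun i' _ => by positivity) (Finset.mem_univ i)
    have h2 : (∑ i' : Fin (dd j), ∑ k : Fin d, |((M j) i' k : ℝ)|)
        ≤ ∑ j' : Fin n, ∑ i' : Fin (dd j'), ∑ k : Fin d, |((M j') i' k : ℝ)| :=
      Finset.single_le_sum (f := fun j' => ∑ i' : Fin (dd j'), ∑ k : Fin d, |((M j') i' k : ℝ)|)
        (fun j' _ => by positivity) (Finset.mem_univ j)
    simp only [hKc]
    linarith
  set η : ℝ := 1 / (2 * Kc) with hη
  have hηpos : 0 < η := by positivity
  have hη12 : η ≤ 1 / 2 := by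
    rw [hη, div_le_div_iff₀ (by positivity) (by norm_num)]
    linarith
  set p0 : Fin d → ℝ := A.symm x0 with hp0
  set ρ : ℝ := r / (2 * CA) with hρdef
  have hρ : 0 < ρ := by positivity
  have hcube : ∀ q : Fin d → ℝ, ‖q - p0‖ ≤ ρ → A q ∈ B := by
    intro q hq
    apply hball
    rw [Metric.mem_ball, dist_eq_norm]
    have h1 : A q - x0 = A (q - p0) := by
      rw [map_sub, hp0, A.apply_symm_apply]
    rw [h1]
    calc ‖A (q - p0)‖ ≤ CA * ‖q - p0‖ := hCAle _
      _ ≤ CA * ρ := mul_le_mul_of_nonneg_left hq hCApos.le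
      _ = r / 2 := by rw [hρdef]; field_simp
      _ < r := by linarith
  have hdet : LinearMap.det (A.toLinearMap) ≠ 0 :=
    IsUnit.ne_zero A.isUnit_det'
  have hdetpos : 0 < |LinearMap.det (A.toLinearMap)| := abs_pos.mpr hdet
  refine ⟨|LinearMap.det (A.toLinearMap)| * (ρ * η / 2) ^ d, by positivity, fun ε hε => ?_⟩
  -- uniform continuity of the polynomial on a compact set
  have hcomp : IsCompact (Metric.closedBall (0 : Fin d → ℝ) (|R| + 1)) :=
    isCompact_closedBall _ _
  have huc := hcomp.uniformContinuousOn_of_continuous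
    ((MvPolynomial.continuous_eval (p := P)).continuousOn)
  rw [Metric.uniformContinuousOn_iff] at huc
  obtain ⟨δ0, hδ0, hucd⟩ := huc ε hε
  set δ : ℝ := min (ρ / 2) (min 1 δ0 / CA) with hδdef
  have hδpos : 0 < δ := by
    apply lt_min (by positivity)
    have : 0 < min 1 δ0 := lt_min one_pos hδ0
    positivity
  have hδρ : δ ≤ ρ / 2 := min_le_left _ _
  have hCAδ : CA * δ ≤ min 1 δ0 := by
    have h1 : δ ≤ min 1 δ0 / CA := min_le_right _ _
    calc CA * δ ≤ CA * (min 1 δ0 / CA) := mul_le_mul_of_nonneg_left h1 hCApos.le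
      _ = min 1 δ0 := by field_simp
  have hCAδ1 : CA * δ ≤ 1 := hCAδ.trans (min_le_left _ _)
  have hCAδ0 : CA * δ ≤ δ0 := hCAδ.trans (min_le_right _ _)
  -- the lattice
  set a : Fin d → ℤ := fun i => ⌈(p0 i - ρ) / δ⌉ with ha
  set m : ℕ := ⌊ρ / δ⌋₊ with hm
  have hρδ2 : 2 ≤ ρ / δ := by
    rw [le_div_iff₀ hδpos]; linarith
  have hmδ : (m : ℝ) * δ ≤ ρ := by
    have := Nat.floor_le (a := ρ / δ) (by positivity)
    calc (m : ℝ) * δ ≤ (ρ / δ) * δ := mul_le_mul_of_nonneg_right this hδpos.le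
      _ = ρ := by field_simp
  have hmlow : ρ / 2 ≤ (m : ℝ) * δ := by
    have h1 : ρ / δ - 1 < (m : ℝ) := Nat.sub_one_lt_floor _
    have h2 : ρ / (2 * δ) ≥ 1 := by
      rw [ge_iff_le, le_div_iff₀ (by positivity)]; linarith
    have h3 : ρ / δ - ρ / (2 * δ) = ρ / (2 * δ) := by field_simp; ring
    have h4 : ρ / (2 * δ) ≤ (m : ℝ) := by
      have : ρ / δ - 1 ≥ ρ / δ - ρ / (2 * δ) := by linarith
      linarith [h3 ▸ this]
    calc ρ / 2 = (ρ / (2 * δ)) * δ := by field_simp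
      _ ≤ (m : ℝ) * δ := mul_le_mul_of_nonneg_right h4 hδpos.le
  set Z : Finset (Fin d → ℤ) := Fintype.piFinset (fun i => Finset.Ico (a i) (a i + m)) with hZ
  set toR : (Fin d → ℤ) → (Fin d → ℝ) := fun z i => (z i : ℝ) with htoR
  set F : Finset (Fin d → ℝ) := Z.image (fun z => A (δ • toR z)) with hF
  obtain ⟨f, hf⟩ := finite_rep ℓ P hnowit F
  set Rnd : ∀ j : Fin n, (Fin (dd j) → ℝ) → (Fin (dd j) → ℤ) :=
    fun j u i => round (((Aj j).symm u i) / δ) with hRnd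
  set ftil : ∀ j : Fin n, (Fin (dd j) → ℝ) → ℝ :=
    fun j u => f j ((Aj j) (fun i => δ * ((Rnd j u i : ℤ) : ℝ))) with hftil
  have hmeas : ∀ j, Measurable (ftil j) := by
    intro j
    have hround : Measurable (round : ℝ → ℤ) := by
      have : (round : ℝ → ℤ) = fun x => ⌊x + 1 / 2⌋ := funext round_eq
      rw [this]
      exact Int.measurable_floor.comp (measurable_add_const _)
    have hsymmc : Continuous ((Aj j).symm : (Fin (dd j) → ℝ) → (Fin (dd j) → ℝ)) :=
      LinearMap.continuous_of_finiteDimensional ((Aj j).symm.toLinearMap)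
    have h1 : Measurable (Rnd j) := by
      apply measurable_pi_lambda
      intro i
      exact hround.comp ((measurable_pi_apply i).comp hsymmc.measurable |>.div_const δ)
    have h2 : ftil j = (fun v : Fin (dd j) → ℤ =>
        f j ((Aj j) (fun i => δ * ((v i : ℤ) : ℝ)))) ∘ (Rnd j) := rfl
    rw [h2]
    exact (measurable_of_countable _).comp h1
  refine ⟨ftil, hmeas, ?_⟩
  set Cz : (Fin d → ℤ) → Set (Fin d → ℝ) :=
    fun z => Set.univ.pi (fun i => Set.Ico (δ * z i) (δ * z i + δ * η)) with hCz
  set U : Set (Fin d → ℝ) := ⋃ z ∈ Z, Cz z with hU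
  -- the key inclusion
  have hkey : ∀ z ∈ Z, ∀ x ∈ Cz z,
      A x ∈ {y ∈ B | |MvPolynomial.eval y P - ∑ j, ftil j (ℓ j y)| < ε} := by
    intro z hz x hx
    have hxi : ∀ i, δ * z i ≤ x i ∧ x i < δ * z i + δ * η := by
      intro i
      have := Set.mem_univ_pi.mp hx i
      simpa [Set.mem_Ico] using this
    have hzi : ∀ i, (a i : ℝ) ≤ z i ∧ (z i : ℝ) ≤ a i + m - 1 := by
      intro i
      have h := Fintype.mem_piFinset.mp hz i
      rw [Finset.mem_Ico] at h
      constructor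
      · exact_mod_cast h.1
      · have : z i ≤ a i + m - 1 := by omega
        exact_mod_cast this
    have hnormxp : ‖x - p0‖ ≤ ρ := by
      rw [pi_norm_le_iff_of_nonneg hρ.le]
      intro i
      have h1 : (p0 i - ρ) / δ ≤ (a i : ℝ) := Int.le_ceil _
      have h2 : (a i : ℝ) < (p0 i - ρ) / δ + 1 := Int.ceil_lt_add_one _
      have h3 := (hzi i).1
      have h4 := (hzi i).2
      have h5 := (hxi i).1
      have h6 := (hxi i).2
      have h7 : p0 i - ρ ≤ (a i : ℝ) * δ := by
        rw [div_le_iff₀ hδpos] at h1; linarith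
      have h8 : (a i : ℝ) * δ < p0 i - ρ + δ := by
        have h8' : ((a i : ℝ) - 1) * δ < p0 i - ρ :=
          (lt_div_iff₀ hδpos).mp (by linarith)
        nlinarith
      rw [Pi.sub_apply, Real.norm_eq_abs, abs_le]
      constructor
      · nlinarith
      · nlinarith [hmδ, hδρ, hη12, hηpos.le, hδpos.le, hρ.le]
    have hAxB : A x ∈ B := hcube x hnormxp
    have hAxR : ‖A x‖ ≤ |R| := by
      have := hR hAxB
      rw [Metric.mem_closedBall, dist_zero_right] at this
      exact this.trans (le_abs_self R)
    set s : Fin d → ℝ := A (δ • toR z) with hs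
    have hsF : s ∈ F := by
      rw [hF]
      exact Finset.mem_image_of_mem _ hz
    have hxz : ‖x - δ • toR z‖ ≤ δ * η := by
      rw [pi_norm_le_iff_of_nonneg (by positivity)]
      intro i
      have h5 := (hxi i).1
      have h6 := (hxi i).2
      rw [Pi.sub_apply, Pi.smul_apply, smul_eq_mul, Real.norm_eq_abs, abs_le]
      constructor
      · show -(δ * η) ≤ x i - δ * (toR z i)
        simp only [htoR]; nlinarith
      · show x i - δ * (toR z i) ≤ δ * η
        simp only [htoR]; nlinarith
    have hys : ‖A x - s‖ ≤ CA * (δ * η) := by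
      have h1 : A x - s = A (x - δ • toR z) := by rw [map_sub, hs]
      rw [h1]
      calc ‖A (x - δ • toR z)‖ ≤ CA * ‖x - δ • toR z‖ := hCAle _
        _ ≤ CA * (δ * η) := mul_le_mul_of_nonneg_left hxz hCApos.le
    have bound1 : ‖A x - s‖ < δ0 := by
      have : CA * (δ * η) ≤ δ0 * η := by nlinarith
      nlinarith [hδ0, hηpos, hη12]
    have bound2 : ‖A x - s‖ ≤ 1 := by nlinarith [hCAδ1, hηpos, hη12]
    have hyK : A x ∈ Metric.closedBall (0 : Fin d → ℝ) (|R| + 1) := by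
      rw [Metric.mem_closedBall, dist_zero_right]
      linarith
    have hsK : s ∈ Metric.closedBall (0 : Fin d → ℝ) (|R| + 1) := by
      rw [Metric.mem_closedBall, dist_zero_right]
      have h1 : ‖s‖ = ‖A x - (A x - s)‖ := by rw [sub_sub_cancel]
      have h2 : ‖A x - (A x - s)‖ ≤ ‖A x‖ + ‖A x - s‖ := norm_sub_le _ _
      linarith
    have heval : |MvPolynomial.eval (A x) P - MvPolynomial.eval s P| < ε := by
      have := hucd (A x) hyK s hsK (by rw [dist_eq_norm]; exact bound1)
      rwa [Real.dist_eq] at this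
    have hround : ∀ j, ftil j (ℓ j (A x)) = f j (ℓ j s) := by
      intro j
      have hv : (Aj j).symm (ℓ j (A x)) = ((M j).map fun w => (w : ℝ)).mulVec x := hM j x
      have hRz : Rnd j (ℓ j (A x)) = (M j).mulVec z := by
        funext i
        show round ((((Aj j).symm (ℓ j (A x))) i) / δ) = ((M j).mulVec z) i
        rw [hv]
        have hcomp : (((M j).map fun w => (w : ℝ)).mulVec x) i
            = ∑ k, ((M j) i k : ℝ) * x k := by
          simp [Matrix.mulVec, dotProduct, Matrix.map_apply]
        rw [hcomp]
        have hsplit : (∑ k, ((M j) i k : ℝ) * x k)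
            = δ * (∑ k, ((M j) i k : ℝ) * (z k : ℝ))
              + ∑ k, ((M j) i k : ℝ) * (x k - δ * (z k : ℝ)) := by
          rw [Finset.mul_sum, ← Finset.sum_add_distrib]
          exact Finset.sum_congr rfl fun k _ => by ring
        rw [hsplit]
        set T : ℝ := ∑ k, ((M j) i k : ℝ) * (x k - δ * (z k : ℝ)) with hT
        have hTabs : |T| ≤ (Kc - 1) * (δ * η) := by
          calc |T| ≤ ∑ k, |((M j) i k : ℝ) * (x k - δ * (z k : ℝ))| :=
              Finset.abs_sum_le_sum_abs _ _
            _ ≤ ∑ k, |((M j) i k : ℝ)| * (δ * η) := by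
              refine Finset.sum_le_sum fun k _ => ?_
              rw [abs_mul]
              refine mul_le_mul_of_nonneg_left ?_ (abs_nonneg _)
              have h5 := (hxi k).1
              have h6 := (hxi k).2
              rw [abs_le]
              constructor <;> nlinarith
            _ = (∑ k, |((M j) i k : ℝ)|) * (δ * η) := by rw [Finset.sum_mul]
            _ ≤ (Kc - 1) * (δ * η) := by
              refine mul_le_mul_of_nonneg_right (hrow j i) (by positivity)
        have hNc : ((((M j).mulVec z) i : ℤ) : ℝ) = ∑ k, ((M j) i k : ℝ) * (z k : ℝ) := by
          simp [Matrix.mulVec, dotProduct]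
        have hexpr : (δ * (∑ k, ((M j) i k : ℝ) * (z k : ℝ)) + T) / δ
            = ((((M j).mulVec z) i : ℤ) : ℝ) + T / δ := by
          rw [hNc]
          field_simp
        rw [hexpr, round_intCast_add]
        have hτ : |T / δ| < 1 / 2 := by
          rw [abs_div, abs_of_pos hδpos, div_lt_iff₀ hδpos]
          have h9 : (Kc - 1) * η < Kc * η := by nlinarith
          have h10 : Kc * η = 1 / 2 := by
            rw [hη]; field_simp
          have h11 : (Kc - 1) * η * δ < 1 / 2 * δ :=
            mul_lt_mul_of_pos_right (by linarith) hδpos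
          nlinarith [hTabs, h11]
        have : round (T / δ) = 0 := by
          rw [round_eq_zero_iff]
          rw [abs_lt] at hτ
          exact ⟨by linarith [hτ.1], by linarith [hτ.2]⟩
        rw [this, add_zero]
      have hmul : (((M j).map fun w => (w : ℝ)).mulVec (δ • toR z))
          = fun i => δ * ((((M j).mulVec z) i : ℤ) : ℝ) := by
        funext i
        have ha1 : (((M j).map fun w => (w : ℝ)).mulVec (δ • toR z)) i
            = ∑ k, ((M j) i k : ℝ) * (δ * (z k : ℝ)) := by
          simp [Matrix.mulVec, dotProduct, Matrix.map_apply, htoR]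
        have ha2 : ((((M j).mulVec z) i : ℤ) : ℝ) = ∑ k, ((M j) i k : ℝ) * (z k : ℝ) := by
          simp [Matrix.mulVec, dotProduct]
        rw [ha1, ha2, Finset.mul_sum]
        exact Finset.sum_congr rfl fun k _ => by ring
      have hs1 : ℓ j s = (Aj j) (fun i => δ * ((((M j).mulVec z) i : ℤ) : ℝ)) := by
        have h2 : (Aj j).symm (ℓ j (A (δ • toR z)))
            = ((M j).map fun w => (w : ℝ)).mulVec (δ • toR z) := hM j _
        calc ℓ j s = (Aj j) ((Aj j).symm (ℓ j s)) := ((Aj j).apply_symm_apply _).symm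
          _ = (Aj j) (fun i => δ * ((((M j).mulVec z) i : ℤ) : ℝ)) := by
            rw [hs, h2, hmul]
      show f j ((Aj j) (fun i => δ * ((Rnd j (ℓ j (A x)) i : ℤ) : ℝ))) = f j (ℓ j s)
      rw [hRz, hs1]
    refine ⟨hAxB, ?_⟩
    have hsum : ∑ j, ftil j (ℓ j (A x)) = ∑ j, f j (ℓ j s) :=
      Finset.sum_congr rfl fun j _ => hround j
    have hPs : MvPolynomial.eval s P = ∑ j, f j (ℓ j s) := hf s hsF
    rw [hsum, ← hPs]
    exact heval
  -- measure computation
  have hCzmeas : ∀ z, MeasurableSet (Cz z) :=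
    fun z => MeasurableSet.univ_pi fun i => measurableSet_Ico
  have hdisj : (↑Z : Set (Fin d → ℤ)).PairwiseDisjoint Cz := by
    intro z1 _ z2 _ hne
    refine Set.disjoint_left.mpr fun x hx1 hx2 => hne ?_
    funext i
    have h1 := Set.mem_univ_pi.mp hx1 i
    have h2 := Set.mem_univ_pi.mp hx2 i
    simp only [Set.mem_Ico] at h1 h2
    have habs : |(z1 i : ℝ) - (z2 i : ℝ)| < 1 := by
      rw [abs_lt]
      constructor <;> nlinarith [hηpos, hη12, hδpos]
    have : |z1 i - z2 i| < 1 := by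
      have : |((z1 i - z2 i : ℤ) : ℝ)| < 1 := by push_cast; exact habs
      exact_mod_cast this
    have := Int.abs_lt_one_iff.mp this
    omega
  have hvolC : ∀ z, volume (Cz z) = ENNReal.ofReal ((δ * η) ^ d) := by
    intro z
    show volume (Set.univ.pi fun i => Set.Ico (δ * z i) (δ * z i + δ * η)) = _
    rw [volume_pi_pi]
    have : ∀ i : Fin d, volume (Set.Ico (δ * (z i : ℝ)) (δ * z i + δ * η))
        = ENNReal.ofReal (δ * η) := by
      intro i
      rw [Real.volume_Ico]
      congr 1
      ring
    rw [Finset.prod_congr rfl fun i _ => this i, Finset.prod_const, Finset.card_univ,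
      Fintype.card_fin, ← ENNReal.ofReal_pow (by positivity)]
  have hvolU : volume U = (m ^ d : ℕ) * ENNReal.ofReal ((δ * η) ^ d) := by
    rw [hU, measure_biUnion_finset hdisj (fun z _ => hCzmeas z)]
    rw [Finset.sum_congr rfl fun z _ => hvolC z, Finset.sum_const, nsmul_eq_mul]
    congr 2
    rw [hZ, Fintype.card_piFinset]
    have : ∀ i : Fin d, (Finset.Ico (a i) (a i + m)).card = m := by
      intro i
      rw [Int.card_Ico]
      omega
    rw [Finset.prod_congr rfl fun i _ => this i, Finset.prod_const, Finset.card_univ,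
      Fintype.card_fin]
  have himg : volume ((fun x => A x) '' U)
      = ENNReal.ofReal |LinearMap.det (A.toLinearMap)| * volume U := by
    have : (fun x => A x) '' U = A.toLinearMap '' U := rfl
    rw [this]
    exact Measure.addHaar_image_linearMap volume A.toLinearMap U
  calc ENNReal.ofReal (|LinearMap.det (A.toLinearMap)| * (ρ * η / 2) ^ d)
      = ENNReal.ofReal |LinearMap.det (A.toLinearMap)|
        * ENNReal.ofReal ((ρ * η / 2) ^ d) := ENNReal.ofReal_mul hdetpos.le
    _ ≤ ENNReal.ofReal |LinearMap.det (A.toLinearMap)|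
        * ((m ^ d : ℕ) * ENNReal.ofReal ((δ * η) ^ d)) := by
      gcongr
      rw [← ENNReal.ofReal_natCast (m ^ d), ← ENNReal.ofReal_mul (by positivity)]
      apply ENNReal.ofReal_le_ofReal
      have h1 : (ρ * η / 2) ^ d ≤ ((m : ℝ) * δ * η) ^ d := by
        apply pow_le_pow_left₀ (by positivity)
        nlinarith
      calc (ρ * η / 2) ^ d ≤ ((m : ℝ) * δ * η) ^ d := h1
        _ = (m : ℝ) ^ d * (δ * η) ^ d := by rw [mul_assoc, mul_pow]
        _ = ((m ^ d : ℕ) : ℝ) * (δ * η) ^ d := by push_cast; ring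
    _ = volume ((fun x => A x) '' U) := by rw [himg, hvolU]
    _ ≤ volume {y ∈ B | |MvPolynomial.eval y P - ∑ j, ftil j (ℓ j y)| < ε} := by
      apply measure_mono
      rintro y ⟨x, hxU, rfl⟩
      obtain ⟨z, hzZ, hxC⟩ := Set.mem_iUnion₂.mp hxU
      exact hkey z hzZ x hxC
end

section
/- There exists a constant C < ∞ such that for every twice continuously differentiable function φ : [0,1] → ℝ satisfying φ'(t) ≥ 1 and φ''(t) ≥ 0 for all t ∈ [0,1], and every δ ∈ (0, 1/2], the Lebesgue measure of {t ∈ [0,1] : dist(φ(t), 2πℤ) ≤ δ} is at most C δ log(1/δ). -/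
open MeasureTheory Set


lemma stmt10_near {x δ : ℝ} (h : Metric.infDist x {y : ℝ | ∃ k : ℤ, y = 2 * Real.pi * k} ≤ δ) :
    |x - 2 * Real.pi * round (x / (2 * Real.pi))| ≤ δ := by
  set k : ℤ := round (x / (2 * Real.pi)) with hk
  have hπ : (0:ℝ) < 2 * Real.pi := by positivity
  have e : ∀ m : ℤ, |x - 2 * Real.pi * m| = (2 * Real.pi) * |x / (2 * Real.pi) - m| := by
    intro m
    rw [show x - 2 * Real.pi * m = (2 * Real.pi) * (x / (2 * Real.pi) - m) by field_simp,
      abs_mul, abs_of_pos hπ]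
  have hmin : ∀ k' : ℤ, |x - 2 * Real.pi * k| ≤ |x - 2 * Real.pi * k'| := by
    intro k'
    have h1 : |x / (2 * Real.pi) - k| ≤ |x / (2 * Real.pi) - k'| := by
      rcases eq_or_ne k' k with rfl | hne
      · exact le_refl _
      · have h2 : (1:ℤ) ≤ |k' - k| := Int.one_le_abs (sub_ne_zero.mpr hne)
        have hge : (1:ℝ) ≤ |((k' - k : ℤ) : ℝ)| := by exact_mod_cast h2
        push_cast at hge
        have hr : |x / (2 * Real.pi) - k| ≤ 1 / 2 := abs_sub_round _
        set u := x / (2 * Real.pi)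
        have htri : |(k':ℝ) - (k:ℝ)| ≤ |u - k| + |u - k'| := by
          have h3 : |(u - k) - (u - k')| ≤ |u - k| + |u - k'| := abs_sub _ _
          have h4 : (u - k) - (u - k') = (k':ℝ) - k := by ring
          rwa [h4] at h3
        linarith
    rw [e k, e k']
    exact mul_le_mul_of_nonneg_left h1 hπ.le
  by_contra hcon
  push_neg at hcon
  have hne : {y : ℝ | ∃ k : ℤ, y = 2 * Real.pi * k}.Nonempty := ⟨0, 0, by simp⟩
  have hlt : Metric.infDist x {y : ℝ | ∃ k : ℤ, y = 2 * Real.pi * k} < |x - 2 * Real.pi * k| :=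
    lt_of_le_of_lt h hcon
  obtain ⟨y, ⟨k', rfl⟩, hy⟩ := (Metric.infDist_lt_iff hne).mp hlt
  rw [Real.dist_eq] at hy
  exact absurd hy (not_lt.mpr (hmin k'))

lemma stmt10_key (φ : ℝ → ℝ) (δ : ℝ) (hδ0 : 0 < δ) (hδ2 : δ ≤ 1/2)
    (hcont : ContinuousOn φ (Icc 0 1))
    (hmvt : ∀ x ∈ Icc (0:ℝ) 1, ∀ y ∈ Icc (0:ℝ) 1, x ≤ y → y - x ≤ φ y - φ x)
    (hconv : ConvexOn ℝ (Icc 0 1) φ) :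
    volume {t ∈ Icc (0:ℝ) 1 | Metric.infDist (φ t) {y : ℝ | ∃ k : ℤ, y = 2 * Real.pi * k} ≤ δ}
      ≤ ENNReal.ofReal (3 * δ) := by
  have hπ : (3:ℝ) < Real.pi := Real.pi_gt_three
  have hπ0 : (0:ℝ) < Real.pi := by linarith
  set T := {t ∈ Icc (0:ℝ) 1 | Metric.infDist (φ t) {y : ℝ | ∃ k : ℤ, y = 2 * Real.pi * k} ≤ δ}
    with hT
  have hmono : MonotoneOn φ (Icc 0 1) := fun x hx y hy hxy => by
    have := hmvt x hx y hy hxy; linarith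
  set E : ℤ → Set ℝ := fun k => {t ∈ Icc (0:ℝ) 1 | |φ t - 2 * Real.pi * k| ≤ δ} with hE
  set kmin : ℤ := ⌈(φ 0 - δ) / (2 * Real.pi)⌉ with hkmin
  set kmax : ℤ := ⌊(φ 1 + δ) / (2 * Real.pi)⌋ with hkmax
  have h2π : (0:ℝ) < 2 * Real.pi := by linarith
  -- every point of T lies in some E k with kmin ≤ k ≤ kmax
  have hkrange : ∀ t ∈ T, ∃ k : ℤ, kmin ≤ k ∧ k ≤ kmax ∧ t ∈ E k := by
    intro t ht
    obtain ⟨ht1, ht2⟩ := ht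
    set k : ℤ := round (φ t / (2 * Real.pi)) with hk
    have hnear : |φ t - 2 * Real.pi * k| ≤ δ := stmt10_near ht2
    have h01 : (0:ℝ) ∈ Icc (0:ℝ) 1 := by norm_num
    have h11 : (1:ℝ) ∈ Icc (0:ℝ) 1 := by norm_num
    have hl : φ 0 ≤ φ t := hmono h01 ht1 ht1.1
    have hr : φ t ≤ φ 1 := hmono ht1 h11 ht1.2
    have habs := abs_le.mp hnear
    refine ⟨k, ?_, ?_, ⟨ht1, hnear⟩⟩
    · rw [hkmin]
      apply Int.ceil_le.mpr
      rw [div_le_iff₀ h2π]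
      have : φ 0 - δ ≤ 2 * Real.pi * k := by linarith
      linarith [this]
    · rw [hkmax]
      apply Int.le_floor.mpr
      rw [le_div_iff₀ h2π]
      linarith
  by_cases hTne : T = ∅
  · rw [hTne]; simp
  obtain ⟨t0, ht0⟩ := nonempty_iff_ne_empty.mpr hTne
  obtain ⟨k0, hk01, hk02, _⟩ := hkrange t0 ht0
  have hminmax : kmin ≤ kmax := le_trans hk01 hk02
  set N : ℕ := (kmax - kmin).toNat with hN
  set K : ℕ → ℤ := fun n => kmin + n with hK
  have hKmem : ∀ n : ℕ, n ≤ N → kmin ≤ K n ∧ K n ≤ kmax := by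
    intro n hn
    constructor
    · simp [hK]
    · have : (n : ℤ) ≤ kmax - kmin := by
        calc (n : ℤ) ≤ (N : ℤ) := by exact_mod_cast hn
          _ = kmax - kmin := Int.toNat_of_nonneg (by omega)
      simp [hK]; omega
  -- bounds for 2π K n
  have hkb : ∀ n : ℕ, n ≤ N → φ 0 - δ ≤ 2 * Real.pi * K n ∧ 2 * Real.pi * K n ≤ φ 1 + δ := by
    intro n hn
    obtain ⟨h1, h2⟩ := hKmem n hn
    constructor
    · have h3 : (φ 0 - δ) / (2 * Real.pi) ≤ (K n : ℝ) := by
        have := Int.ceil_le.mp h1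
        exact_mod_cast this
      calc φ 0 - δ = ((φ 0 - δ) / (2 * Real.pi)) * (2 * Real.pi) := by field_simp
        _ ≤ (K n : ℝ) * (2 * Real.pi) := by
            exact mul_le_mul_of_nonneg_right h3 h2π.le
        _ = 2 * Real.pi * K n := by ring
    · have h3 : (K n : ℝ) ≤ (φ 1 + δ) / (2 * Real.pi) := by
        have := Int.le_floor.mp h2
        exact_mod_cast this
      calc 2 * Real.pi * K n = (K n : ℝ) * (2 * Real.pi) := by ring
        _ ≤ ((φ 1 + δ) / (2 * Real.pi)) * (2 * Real.pi) := mul_le_mul_of_nonneg_right h3 h2π.le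
        _ = φ 1 + δ := by field_simp
  -- each E (K n) is nonempty for n ≤ N
  have hEne : ∀ n : ℕ, n ≤ N → (E (K n)).Nonempty := by
    intro n hn
    obtain ⟨hb1, hb2⟩ := hkb n hn
    set v : ℝ := max (φ 0) (2 * Real.pi * K n - δ) with hv
    have hφ01 : φ 0 ≤ φ 1 := hmono (by norm_num) (by norm_num) (by norm_num)
    have hv1 : φ 0 ≤ v := le_max_left _ _
    have hv2 : v ≤ φ 1 := max_le hφ01 (by linarith)
    obtain ⟨t, ht, htv⟩ := intermediate_value_Icc (by norm_num : (0:ℝ) ≤ 1) hcont ⟨hv1, hv2⟩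
    refine ⟨t, ht, ?_⟩
    rw [htv, abs_le]
    constructor
    · have : 2 * Real.pi * K n - δ ≤ v := le_max_right _ _
      linarith
    · have : v ≤ 2 * Real.pi * K n + δ := max_le (by linarith) (by linarith)
      linarith
  -- E k is compact
  have hEclosed : ∀ k : ℤ, IsClosed (E k) := by
    intro k
    have : E k = Icc (0:ℝ) 1 ∩ φ ⁻¹' (Icc (2 * Real.pi * k - δ) (2 * Real.pi * k + δ)) := by
      ext t
      simp only [hE, mem_setOf_eq, mem_inter_iff, mem_preimage, mem_Icc, abs_le]
      constructor
      · rintro ⟨h1, h2, h3⟩; exact ⟨h1, by linarith, by linarith⟩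
      · rintro ⟨h1, h2, h3⟩; exact ⟨h1, by linarith, by linarith⟩
    rw [this]
    exact ContinuousOn.preimage_isClosed_of_isClosed hcont isClosed_Icc isClosed_Icc
  have hEsub : ∀ k : ℤ, E k ⊆ Icc (0:ℝ) 1 := fun k t ht => ht.1
  have hEcpt : ∀ k : ℤ, IsCompact (E k) := fun k =>
    IsCompact.of_isClosed_subset isCompact_Icc (hEclosed k) (hEsub k)
  set A : ℕ → ℝ := fun n => sInf (E (K n)) with hA
  set B : ℕ → ℝ := fun n => sSup (E (K n)) with hB
  have hAmem : ∀ n : ℕ, n ≤ N → A n ∈ E (K n) := fun n hn =>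
    (hEcpt (K n)).sInf_mem (hEne n hn)
  have hBmem : ∀ n : ℕ, n ≤ N → B n ∈ E (K n) := fun n hn =>
    (hEcpt (K n)).sSup_mem (hEne n hn)
  have hAB : ∀ n : ℕ, n ≤ N → A n ≤ B n := fun n hn =>
    le_csSup (hEcpt (K n)).bddAbove (hAmem n hn)
  have hIccSub : ∀ n : ℕ, E (K n) ⊆ Icc (A n) (B n) := fun n t ht =>
    ⟨csInf_le (hEcpt (K n)).bddBelow ht, le_csSup (hEcpt (K n)).bddAbove ht⟩
  -- each component has length ≤ 2δ
  have hlen : ∀ n : ℕ, n ≤ N → B n - A n ≤ 2 * δ := by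
    intro n hn
    have hAm := hAmem n hn
    have hBm := hBmem n hn
    have h1 := hmvt (A n) hAm.1 (B n) hBm.1 (hAB n hn)
    have h2 := abs_le.mp hAm.2
    have h3 := abs_le.mp hBm.2
    linarith
  -- gap estimate
  have hgap : ∀ n : ℕ, n + 1 ≤ N →
      B n < A (n+1) ∧ B (n+1) - A (n+1) ≤ (2 * δ / Real.pi) * (A (n+1) - B n) := by
    intro n hn
    have hn' : n ≤ N := by omega
    have hBm := hBmem n hn'
    have hAm := hAmem (n+1) hn
    have hBm' := hBmem (n+1) hn
    have hKsucc : (K (n+1) : ℝ) = (K n : ℝ) + 1 := by simp [hK]; push_cast; ring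
    have h2 := abs_le.mp hBm.2
    have h3 := abs_le.mp hAm.2
    have h4 := abs_le.mp hBm'.2
    have hP : Real.pi ≤ φ (A (n+1)) - φ (B n) := by
      have : 2 * Real.pi * (K (n+1)) = 2 * Real.pi * K n + 2 * Real.pi := by
        rw [hKsucc]; ring
      rw [this] at h3
      linarith
    have hxy : B n < A (n+1) := by
      by_contra hcon
      push_neg at hcon
      have := hmono hAm.1 hBm.1 hcon
      linarith
    refine ⟨hxy, ?_⟩
    rcases eq_or_lt_of_le (hAB (n+1) hn) with heq | hlt
    · rw [← heq]
      have : (0:ℝ) ≤ (2 * δ / Real.pi) * (A (n+1) - B n) := by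
        apply mul_nonneg (by positivity)
        linarith
      linarith
    · have hslope := hconv.slope_mono_adjacent hBm.1 hBm'.1 hxy hlt
      rw [div_le_div_iff₀ (by linarith) (by linarith)] at hslope
      have hQ : φ (B (n+1)) - φ (A (n+1)) ≤ 2 * δ := by linarith
      have hQ0 : 0 ≤ φ (B (n+1)) - φ (A (n+1)) := by
        have := hmvt (A (n+1)) hAm.1 (B (n+1)) hBm'.1 hlt.le
        linarith
      rw [div_mul_eq_mul_div, le_div_iff₀ hπ0]
      nlinarith [hP, hQ, hQ0, hxy, hlt]
  -- sum bound by induction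
  have hsum : ∀ M : ℕ, M ≤ N →
      ∑ n ∈ Finset.range (M+1), (B n - A n) ≤ 2 * δ + (2 * δ / Real.pi) * (A M - A 0) := by
    intro M
    induction M with
    | zero =>
      intro _
      rw [zero_add, Finset.sum_range_one]
      have := hlen 0 (by omega)
      have hA00 : A 0 - A 0 = 0 := by ring
      rw [hA00, mul_zero]
      linarith
    | succ M ih =>
      intro hM
      have hM' : M ≤ N := by omega
      have hind := ih hM'
      rw [Finset.sum_range_succ]
      obtain ⟨hg1, hg2⟩ := hgap M hM
      have hABM := hAB M hM'
      have hcoef : (0:ℝ) ≤ 2 * δ / Real.pi := by positivity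
      have hkey : (2 * δ / Real.pi) * (A M - A 0) + (2 * δ / Real.pi) * (A (M+1) - B M)
          ≤ (2 * δ / Real.pi) * (A (M+1) - A 0) := by
        rw [← mul_add]
        apply mul_le_mul_of_nonneg_left _ hcoef
        linarith
      linarith
  -- assemble measure bound
  have hsubU : T ⊆ ⋃ n ∈ Finset.range (N+1), E (K n) := by
    intro t ht
    obtain ⟨k, h1, h2, h3⟩ := hkrange t ht
    have hkn : K ((k - kmin).toNat) = k := by
      simp only [hK]
      rw [Int.toNat_of_nonneg (by omega)]
      ring
    have hlt : (k - kmin).toNat < N + 1 := by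
      have : (k - kmin).toNat ≤ N := by omega
      omega
    refine mem_iUnion₂.mpr ⟨(k - kmin).toNat, Finset.mem_range.mpr hlt, ?_⟩
    rwa [hkn]
  calc volume T ≤ volume (⋃ n ∈ Finset.range (N+1), E (K n)) := measure_mono hsubU
    _ ≤ ∑ n ∈ Finset.range (N+1), volume (E (K n)) := measure_biUnion_finset_le _ _
    _ ≤ ∑ n ∈ Finset.range (N+1), ENNReal.ofReal (B n - A n) := by
        apply Finset.sum_le_sum
        intro n hn
        calc volume (E (K n)) ≤ volume (Icc (A n) (B n)) := measure_mono (hIccSub n)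
          _ = ENNReal.ofReal (B n - A n) := Real.volume_Icc
    _ = ENNReal.ofReal (∑ n ∈ Finset.range (N+1), (B n - A n)) := by
        rw [ENNReal.ofReal_sum_of_nonneg]
        intro n hn
        have hn' : n ≤ N := by
          have := Finset.mem_range.mp hn; omega
        linarith [hAB n hn']
    _ ≤ ENNReal.ofReal (3 * δ) := by
        apply ENNReal.ofReal_le_ofReal
        have h1 := hsum N le_rfl
        have hA0 : (0:ℝ) ≤ A 0 := (hAmem 0 (by omega)).1.1
        have hAN : A N ≤ 1 := (hAmem N le_rfl).1.2
        have hcoef : (0:ℝ) ≤ 2 * δ / Real.pi := by positivity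
        have h2 : (2 * δ / Real.pi) * (A N - A 0) ≤ (2 * δ / Real.pi) * 1 :=
          mul_le_mul_of_nonneg_left (by linarith) hcoef
        have h3 : 2 * δ / Real.pi ≤ 2 * δ / 3 := by
          apply div_le_div_of_nonneg_left (by linarith) (by norm_num) (by linarith)
        calc ∑ n ∈ Finset.range (N+1), (B n - A n)
            ≤ 2 * δ + (2 * δ / Real.pi) * (A N - A 0) := h1
          _ ≤ 2 * δ + 2 * δ / 3 := by linarith
          _ ≤ 3 * δ := by linarith

/-- Lemma 5.1 of the paper. There is a universal constant `C` such that for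
every `C²` function `φ : [0,1] → ℝ` with `φ' ≥ 1` and `φ'' ≥ 0` on `[0,1]`, and every
`δ ∈ (0, 1/2]`, the measure of `{t ∈ [0,1] : dist(φ(t), 2πℤ) ≤ δ}` is at most
`C δ log(1/δ)`. -/
theorem stmt10 :
    ∃ C : ℝ, ∀ φ : ℝ → ℝ, ContDiffOn ℝ 2 φ (Set.Icc 0 1) →
      (∀ t ∈ Set.Icc (0 : ℝ) 1, 1 ≤ derivWithin φ (Set.Icc 0 1) t) →
      (∀ t ∈ Set.Icc (0 : ℝ) 1,
        0 ≤ derivWithin (derivWithin φ (Set.Icc 0 1)) (Set.Icc 0 1) t) →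
      ∀ δ : ℝ, δ ∈ Set.Ioc 0 (1 / 2 : ℝ) →
        volume {t ∈ Set.Icc (0 : ℝ) 1 |
            Metric.infDist (φ t) {y : ℝ | ∃ k : ℤ, y = 2 * Real.pi * k} ≤ δ}
          ≤ ENNReal.ofReal (C * δ * Real.log (1 / δ)) := by
  refine ⟨6, ?_⟩
  intro φ hφ h1 h2 δ hδ
  obtain ⟨hδ0, hδ2⟩ := hδ
  set I : Set ℝ := Icc (0:ℝ) 1 with hI
  have hU : UniqueDiffOn ℝ I := uniqueDiffOn_Icc (by norm_num)
  have hcont : ContinuousOn φ I := hφ.continuousOn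
  have hdiff : DifferentiableOn ℝ φ I := hφ.differentiableOn two_ne_zero
  have hdint : DifferentiableOn ℝ φ (interior I) := hdiff.mono interior_subset
  -- MVT hypothesis
  have hmvt : ∀ x ∈ I, ∀ y ∈ I, x ≤ y → y - x ≤ φ y - φ x := by
    have hge : ∀ x ∈ interior I, (1:ℝ) ≤ deriv φ x := by
      intro x hx
      have hxI : x ∈ I := interior_subset hx
      have hmem : I ∈ nhds x := by
        rw [hI, mem_nhds_iff]
        refine ⟨interior I, interior_subset, isOpen_interior, hx⟩
      rw [← derivWithin_of_mem_nhds hmem]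
      exact h1 x hxI
    have := (convex_Icc (0:ℝ) 1).mul_sub_le_image_sub_of_le_deriv hcont hdint hge
    intro x hx y hy hxy
    have := this x hx y hy hxy
    linarith
  -- convexity
  have hconv : ConvexOn ℝ I φ := by
    set f' : ℝ → ℝ := derivWithin φ I with hf'def
    set f'' : ℝ → ℝ := derivWithin f' I with hf''def
    have hφ' : ContDiffOn ℝ 1 f' I := hφ.derivWithin hU (by norm_num)
    have hd1 : ∀ x ∈ interior I, HasDerivWithinAt φ (f' x) (interior I) x := by
      intro x hx
      exact ((hdiff x (interior_subset hx)).hasDerivWithinAt).mono interior_subset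
    have hd2 : ∀ x ∈ interior I, HasDerivWithinAt f' (f'' x) (interior I) x := by
      intro x hx
      have : DifferentiableWithinAt ℝ f' I x :=
        (hφ'.differentiableOn one_ne_zero) x (interior_subset hx)
      exact this.hasDerivWithinAt.mono interior_subset
    exact convexOn_of_hasDerivWithinAt2_nonneg (convex_Icc 0 1) hcont hd1 hd2
      (fun x hx => h2 x (interior_subset hx))
  have hkey := stmt10_key φ δ hδ0 hδ2 hcont hmvt hconv
  refine le_trans hkey (ENNReal.ofReal_le_ofReal ?_)
  have hlog : Real.log 2 ≤ Real.log (1/δ) := by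
    apply Real.log_le_log (by norm_num)
    rw [le_div_iff₀ hδ0]
    linarith
  have hlog2 : (1/2 : ℝ) ≤ Real.log 2 := by
    have := Real.log_two_gt_d9
    linarith
  nlinarith [hδ0, hlog, hlog2]
end

section
/- Let ℓ_j : ℝ^d → ℝ^{d_j} (1 ≤ j ≤ n) be surjective linear maps, P : ℝ^d → ℝ a measurable function, B ⊂ ℝ^d a bounded measurable set, and ζ ∈ C_c^∞(ℝ^d) with ζ ≥ 0 and ζ ≡ 1 on B. Suppose there exists a bounded function ρ : ℝ → [0,∞) with ρ(λ) → 0 as |λ| → ∞ such that for every λ ∈ ℝ and all measurable functions f_j : ℝ^{d_j} → ℂ with |f_j| ≤ 1 everywhere, |∫_{ℝ^d} e^{iλP(y)} ∏_{j=1}^n f_j(ℓ_j(y)) ζ(y) dy| ≤ ρ(λ). Then there exists a function Θ : (0,∞) → [0,∞) with Θ(ε) → 0 as ε → 0⁺ such that for every ε > 0 and all measurable functions g_j : ℝ^{d_j} → ℝ, |E_ε(P, g_1, …, g_n)| ≤ Θ(ε). -/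
open MeasureTheory Filter


open MeasureTheory Filter intervalIntegral

section Helpers

lemma aux_ii {f : ℝ → ℝ} (hf : Measurable f) {C : ℝ} (hC : ∀ x, |f x| ≤ C)
    (a b : ℝ) : IntervalIntegrable f volume a b := by
  refine (_root_.intervalIntegrable_const (c := C)).mono_fun hf.aestronglyMeasurable ?_
  exact Eventually.of_forall fun x => by
    simpa [Real.norm_eq_abs] using (hC x).trans (le_abs_self C)

lemma aux_int_mul_zeta {d : ℕ} {ζ : (Fin d → ℝ) → ℝ} (hζc : Continuous ζ)
    (hζsupp : HasCompactSupport ζ) (hζnn : ∀ y, 0 ≤ ζ y)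
    {f : (Fin d → ℝ) → ℝ} (hf : Measurable f) {C : ℝ} (hC : ∀ x, |f x| ≤ C) :
    Integrable (fun y => f y * ζ y) := by
  have hint : Integrable (fun y => C * ζ y) :=
    (hζc.integrable_of_hasCompactSupport hζsupp).const_mul C
  refine hint.mono' (hf.mul hζc.measurable).aestronglyMeasurable ?_
  refine Eventually.of_forall fun y => ?_
  have : |f y * ζ y| ≤ C * ζ y := by
    rw [abs_mul, abs_of_nonneg (hζnn y)]
    exact mul_le_mul_of_nonneg_right (hC y) (hζnn y)
  simpa [Real.norm_eq_abs, abs_mul] using this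

end Helpers


noncomputable def kern (L τ : ℝ) : ℝ :=
  if τ = 0 then L else 2 * (1 - Real.cos (L * τ)) / (L * τ ^ 2)

lemma kern_meas (L : ℝ) : Measurable (kern L) := by
  unfold kern
  exact Measurable.ite (measurableSet_singleton 0) measurable_const
    ((measurable_const.sub ((Real.continuous_cos.measurable).comp
      (measurable_const.mul measurable_id))).const_mul 2 |>.div
      ((measurable_id.pow_const 2).const_mul L))

lemma kern_nonneg {L : ℝ} (hL : 0 < L) (τ : ℝ) : 0 ≤ kern L τ := by
  unfold kern
  split
  · exact hL.le
  · apply div_nonneg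
    · have := Real.cos_le_one (L * τ); linarith
    · positivity

lemma kern_le {L : ℝ} (hL : 0 < L) (τ : ℝ) : kern L τ ≤ L := by
  unfold kern
  split
  · exact le_rfl
  · rename_i h
    rw [div_le_iff₀ (by positivity)]
    have h1 : 1 - Real.cos (L * τ) ≤ (L * τ) ^ 2 / 2 := by
      have := Real.one_sub_sq_div_two_le_cos (x := L * τ); linarith
    nlinarith [sq_nonneg (L*τ), sq_abs τ, hL.le, sq_nonneg τ]

lemma one_sub_cos_ge {u : ℝ} (hu : |u| ≤ 1) : (2/5) * u ^ 2 ≤ 1 - Real.cos u := by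
  wlog h : 0 ≤ u generalizing u
  · have := this (u := -u) (by simpa using hu) (by linarith [not_le.mp h])
    simpa using this
  rcases eq_or_lt_of_le h with rfl | hpos
  · simp
  · have hu1 : u ≤ 1 := (abs_le.mp hu).2
    have hu2 : u ^ 2 ≤ 1 := by nlinarith
    have hcube : u ^ 3 ≤ u := by nlinarith [mul_le_mul_of_nonneg_left hu2 hpos.le]
    have hs : u/2 - (u/2) ^ 3 / 4 < Real.sin (u/2) :=
      by have := Real.sin_gt_sub_cube (x := u/2) (by linarith); linarith [pow_pos (show (0:ℝ) < u/2 by linarith) 3]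
    have hs2 : (15/32) * u < Real.sin (u/2) := by nlinarith
    have hsq : ((15/32) * u) ^ 2 ≤ Real.sin (u/2) ^ 2 := by
      have h0 : (0:ℝ) ≤ (15/32) * u := by positivity
      nlinarith
    have hcos : Real.cos u = 1 - 2 * Real.sin (u/2) ^ 2 := by
      have h1 : Real.cos (2 * (u/2)) = Real.cos (u/2) ^ 2 - Real.sin (u/2) ^ 2 :=
        Real.cos_two_mul' (u/2)
      have h2 : Real.cos (u/2) ^ 2 = 1 - Real.sin (u/2) ^ 2 := Real.cos_sq' (u/2)
      have h3 : (2 : ℝ) * (u/2) = u := by ring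
      rw [h3] at h1; rw [h1, h2]; ring
    nlinarith

lemma kern_ge {L τ : ℝ} (hL : 0 < L) (hτ : |τ| * L ≤ 1) : (4/5) * L ≤ kern L τ := by
  unfold kern
  split
  · linarith
  · rename_i h
    rw [le_div_iff₀ (by positivity)]
    have h1 : |L * τ| ≤ 1 := by rw [abs_mul, abs_of_pos hL, mul_comm]; exact hτ
    have := one_sub_cos_ge h1
    nlinarith [sq_nonneg τ, sq_abs (L*τ)]


lemma kern_integral {L : ℝ} (hL : 0 < L) (τ : ℝ) :
    ∫ lam in (-L)..L, (1 - |lam|/L) * Real.cos (lam * τ) = kern L τ := by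
  have hcont : Continuous (fun lam : ℝ => (1 - |lam|/L) * Real.cos (lam * τ)) := by
    fun_prop
  have hsplit : ∫ lam in (-L)..L, (1 - |lam|/L) * Real.cos (lam * τ)
      = (∫ lam in (-L)..(0:ℝ), (1 - |lam|/L) * Real.cos (lam * τ))
        + ∫ lam in (0:ℝ)..L, (1 - |lam|/L) * Real.cos (lam * τ) :=
    (integral_add_adjacent_intervals (hcont.intervalIntegrable _ _)
      (hcont.intervalIntegrable _ _)).symm
  have hneg : (∫ lam in (-L)..(0:ℝ), (1 - |lam|/L) * Real.cos (lam * τ))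
      = ∫ lam in (0:ℝ)..L, (1 - |lam|/L) * Real.cos (lam * τ) := by
    have := intervalIntegral.integral_comp_neg
      (a := 0) (b := L) (fun lam : ℝ => (1 - |lam|/L) * Real.cos (lam * τ))
    simp only [neg_zero] at this
    rw [← this]
    congr 1
    funext x
    simp [abs_neg, Real.cos_neg, neg_mul]
  have hpos : (∫ lam in (0:ℝ)..L, (1 - |lam|/L) * Real.cos (lam * τ))
      = ∫ lam in (0:ℝ)..L, (1 - lam/L) * Real.cos (lam * τ) := by
    apply intervalIntegral.integral_congr
    intro x hx
    rw [Set.uIcc_of_le hL.le] at hx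
    simp only
    rw [abs_of_nonneg hx.1]
  rw [hsplit, hneg, hpos]
  rcases eq_or_ne τ 0 with rfl | hτ
  · simp only [mul_zero, Real.cos_zero, mul_one, kern, if_pos rfl]
    have e1 : (∫ lam in (0:ℝ)..L, (1 - lam/L)) = ∫ lam in (0:ℝ)..L, (1 - lam * (1/L)) := by
      congr 1; funext lam; ring
    have e2 : (∫ lam in (0:ℝ)..L, (1 - lam * (1/L)))
        = (∫ lam in (0:ℝ)..L, (1:ℝ)) - (∫ lam in (0:ℝ)..L, lam * (1/L)) := by
      exact intervalIntegral.integral_sub intervalIntegrable_const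
        (by apply Continuous.intervalIntegrable; fun_prop)
    rw [e1, e2, intervalIntegral.integral_mul_const, integral_id]
    simp only [intervalIntegral.integral_const, smul_eq_mul, mul_one, kern, if_pos rfl, ↓reduceIte]
    field_simp
    ring
  · have hFTC : (∫ lam in (0:ℝ)..L, (1 - lam/L) * Real.cos (lam * τ))
        = (1 - Real.cos (L * τ)) / (L * τ^2) := by
      have key : ∀ x ∈ Set.uIcc (0:ℝ) L,
          HasDerivAt (fun lam => (1 - lam/L) * (Real.sin (lam * τ) / τ)
            - Real.cos (lam * τ) / (L * τ^2)) ((1 - x/L) * Real.cos (x * τ)) x := by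
        intro x _
        have h1 : HasDerivAt (fun lam : ℝ => 1 - lam/L) (-(1/L)) x := by
          simpa using ((hasDerivAt_id x).div_const L).const_sub 1
        have h2 : HasDerivAt (fun lam : ℝ => Real.sin (lam * τ))
            (Real.cos (x * τ) * τ) x := by
          have := (Real.hasDerivAt_sin (x * τ)).comp x ((hasDerivAt_id x).mul_const τ)
          simpa [Function.comp_def] using this
        have h3 : HasDerivAt (fun lam : ℝ => Real.cos (lam * τ))
            (-Real.sin (x * τ) * τ) x := by
          have := (Real.hasDerivAt_cos (x * τ)).comp x ((hasDerivAt_id x).mul_const τ)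
          simpa [Function.comp_def] using this
        have h := (h1.mul (h2.div_const τ)).sub (h3.div_const (L * τ^2))
        refine h.congr_deriv ?_
        field_simp
        ring
      have hint : IntervalIntegrable (fun x => (1 - x/L) * Real.cos (x * τ)) volume 0 L := by
        apply Continuous.intervalIntegrable; fun_prop
      have := intervalIntegral.integral_eq_sub_of_hasDerivAt key hint
      rw [this]
      simp only [Real.sin_zero, Real.cos_zero, zero_mul, Real.sin_zero]
      field_simp
      ring
    rw [hFTC]
    simp only [kern, if_neg hτ]
    ring

noncomputable def rhoBar (ρ : ℝ → ℝ) (lam : ℝ) : ℝ :=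
  sSup (ρ '' {μ : ℝ | |lam| ≤ |μ|})

section rhoBarLemmas
variable {ρ : ℝ → ℝ} {Cρ : ℝ} (hρnn : ∀ lam, 0 ≤ ρ lam) (hρbdd : ∀ lam, ρ lam ≤ Cρ)

lemma rhoBar_set_nonempty (lam : ℝ) : (ρ '' {μ : ℝ | |lam| ≤ |μ|}).Nonempty :=
  ⟨ρ lam, ⟨lam, by simp, rfl⟩⟩

include hρbdd in
lemma rhoBar_bddAbove (lam : ℝ) : BddAbove (ρ '' {μ : ℝ | |lam| ≤ |μ|}) :=
  ⟨Cρ, fun x ⟨μ, _, hμ⟩ => hμ ▸ hρbdd μ⟩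

include hρbdd in
lemma le_rhoBar (lam : ℝ) : ρ lam ≤ rhoBar ρ lam :=
  le_csSup (rhoBar_bddAbove hρbdd lam) ⟨lam, by simp, rfl⟩

include hρnn hρbdd in
lemma rhoBar_nonneg (lam : ℝ) : 0 ≤ rhoBar ρ lam :=
  (hρnn lam).trans (le_rhoBar hρbdd lam)

include hρbdd in
lemma rhoBar_le (lam : ℝ) : rhoBar ρ lam ≤ Cρ :=
  csSup_le (rhoBar_set_nonempty lam) (fun x ⟨μ, _, hμ⟩ => hμ ▸ hρbdd μ)

include hρbdd in
lemma rhoBar_measurable : Measurable (rhoBar ρ) := by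
  have hq : Antitone (fun r : ℝ => sSup (ρ '' {μ : ℝ | r ≤ |μ|})) := by
    intro r₁ r₂ h
    apply csSup_le_csSup
    · exact ⟨Cρ, fun x ⟨μ, _, hμ⟩ => hμ ▸ hρbdd μ⟩
    · exact ⟨ρ r₂, ⟨r₂, by simp [le_abs_self], rfl⟩⟩
    · exact Set.image_mono (fun μ hμ => le_trans h hμ)
  exact (Antitone.measurable hq).comp continuous_abs.measurable

lemma rhoBar_decay (hρ0 : Tendsto ρ (cocompact ℝ) (nhds 0)) {δ : ℝ} (hδ : 0 < δ) :
    ∃ M : ℝ, 0 < M ∧ ∀ lam : ℝ, M ≤ |lam| → rhoBar ρ lam ≤ δ := by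
  have hev : ∀ᶠ x in cocompact ℝ, |ρ x| < δ := by
    have := Metric.tendsto_nhds.mp hρ0 δ hδ
    simpa [Real.dist_eq] using this
  obtain ⟨K, hK, hKs⟩ := (hasBasis_cocompact.eventually_iff).mp hev
  obtain ⟨r, hr⟩ := hK.isBounded.subset_closedBall 0
  refine ⟨max r 0 + 1, by positivity, fun lam hlam => ?_⟩
  apply csSup_le (rhoBar_set_nonempty lam)
  rintro x ⟨μ, hμ, rfl⟩
  have : μ ∉ K := by
    intro hμK
    have := hr hμK
    rw [Metric.mem_closedBall, Real.dist_eq, sub_zero] at this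
    have h1 : max r 0 + 1 ≤ |μ| := le_trans hlam hμ
    have : r ≤ max r 0 := le_max_left _ _
    linarith
  have := hKs this
  exact le_of_lt (lt_of_le_of_lt (le_abs_self _) this)

end rhoBarLemmas


lemma theta_tendsto {r : ℝ → ℝ} (hrm : Measurable r) {C : ℝ} (hC0 : 0 < C)
    (hrnn : ∀ x, 0 ≤ r x) (hrC : ∀ x, r x ≤ C)
    (hdecay : ∀ δ : ℝ, 0 < δ → ∃ M : ℝ, 0 < M ∧ ∀ lam : ℝ, M ≤ |lam| → r lam ≤ δ) :
    Tendsto (fun ε : ℝ => if ε ≤ 0 then 0 else (5/4) * ε * ∫ lam in (-(1/ε))..(1/ε), r lam)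
      (nhdsWithin 0 (Set.Ioi 0)) (nhds 0) := by
  have habs : ∀ x, |r x| ≤ C := fun x => by rw [abs_of_nonneg (hrnn x)]; exact hrC x
  have hii : ∀ a b : ℝ, IntervalIntegrable r volume a b := aux_ii hrm habs
  rw [Metric.tendsto_nhdsWithin_nhds]
  intro δ hδ
  obtain ⟨M, hM, hMd⟩ := hdecay (δ/5) (by linarith)
  refine ⟨min (1/M) (δ/(5*M*C+1)), by positivity, fun ε hε hdist => ?_⟩
  have hε0 : 0 < ε := hε
  rw [Real.dist_eq, sub_zero, abs_of_pos hε0] at hdist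
  have hεM : ε < 1/M := lt_of_lt_of_le hdist (min_le_left _ _)
  have hεδ : ε < δ/(5*M*C+1) := lt_of_lt_of_le hdist (min_le_right _ _)
  set L := 1/ε with hL
  have hLpos : 0 < L := by positivity
  have hML : M ≤ L := by
    rw [hL, le_div_iff₀ hε0]
    have := (lt_div_iff₀ hM).mp hεM
    nlinarith
  -- split the integral
  have hsplit : (∫ lam in (-L)..L, r lam)
      = (∫ lam in (-L)..(-M), r lam) + (∫ lam in (-M)..M, r lam)
        + ∫ lam in M..L, r lam := by
    rw [integral_add_adjacent_intervals (hii _ _) (hii _ _),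
      integral_add_adjacent_intervals (hii _ _) (hii _ _)]
  have hmid : (∫ lam in (-M)..M, r lam) ≤ 2*M*C := by
    calc (∫ lam in (-M)..M, r lam) ≤ ∫ _lam in (-M)..M, C :=
          integral_mono_on (by linarith) (hii _ _) intervalIntegrable_const
            (fun x _ => hrC x)
      _ = 2*M*C := by simp only [intervalIntegral.integral_const, smul_eq_mul]; ring
  have htailR : (∫ lam in M..L, r lam) ≤ (L - M) * (δ/5) := by
    calc (∫ lam in M..L, r lam) ≤ ∫ _lam in M..L, (δ/5) :=
          integral_mono_on hML (hii _ _) intervalIntegrable_const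
            (fun x hx => hMd x (le_trans hx.1 (le_abs_self x)))
      _ = (L - M) * (δ/5) := by simp only [intervalIntegral.integral_const, smul_eq_mul]
  have htailL : (∫ lam in (-L)..(-M), r lam) ≤ (L - M) * (δ/5) := by
    calc (∫ lam in (-L)..(-M), r lam) ≤ ∫ _lam in (-L)..(-M), (δ/5) :=
          integral_mono_on (by linarith) (hii _ _) intervalIntegrable_const
            (fun x hx => hMd x (by
              have : x ≤ -M := hx.2
              rw [abs_of_nonpos (by linarith)]
              linarith))
      _ = (L - M) * (δ/5) := by simp only [intervalIntegral.integral_const, smul_eq_mul]; ring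
  have hnn : 0 ≤ ∫ lam in (-L)..L, r lam :=
    intervalIntegral.integral_nonneg (by linarith) (fun x _ => hrnn x)
  have hbound : (∫ lam in (-L)..L, r lam) ≤ 2*M*C + 2*(L-M)*(δ/5) := by
    rw [hsplit]; linarith
  rw [Real.dist_eq, sub_zero, if_neg (not_le.mpr hε0)]
  have hεL : ε * L = 1 := by rw [hL]; field_simp
  have hΘ : (5/4) * ε * ∫ lam in (-L)..L, r lam
      ≤ (5/2)*M*C*ε + δ/2 := by
    have h1 : (5/4) * ε * (∫ lam in (-L)..L, r lam)
        ≤ (5/4) * ε * (2*M*C + 2*(L-M)*(δ/5)) := by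
      apply mul_le_mul_of_nonneg_left hbound (by positivity)
    have h2 : (5/4) * ε * (2*M*C + 2*(L-M)*(δ/5)) ≤ (5/2)*M*C*ε + δ/2 := by
      have h3 : ε * (L - M) ≤ 1 := by nlinarith [hεL, mul_nonneg hε0.le hM.le]
      nlinarith
    linarith
  have hnn2 : 0 ≤ (5/4) * ε * ∫ lam in (-L)..L, r lam := by positivity
  rw [abs_of_nonneg hnn2]
  have : (5/2)*M*C*ε < δ/2 := by
    have := (lt_div_iff₀ (by positivity : (0:ℝ) < 5*M*C+1)).mp hεδ
    nlinarith
  linarith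


/-- Uniform decay `|𝓘_λ| ≤ ρ(λ)` with `ρ(λ) → 0` as `|λ| → ∞` for the
multilinear oscillatory integral implies a uniform sublevel set bound
`|E_ε(P, g_1, …, g_n)| ≤ Θ(ε)` with `Θ(ε) → 0` as `ε → 0⁺`. -/
theorem stmt13 (d n : ℕ) (dd : Fin n → ℕ)
    (ℓ : ∀ j : Fin n, (Fin d → ℝ) →ₗ[ℝ] (Fin (dd j) → ℝ))
    (hsurj : ∀ j, Function.Surjective (ℓ j))
    (P : (Fin d → ℝ) → ℝ) (hP : Measurable P)
    (B : Set (Fin d → ℝ)) (hB : Bornology.IsBounded B) (hBm : MeasurableSet B)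
    (ζ : (Fin d → ℝ) → ℝ) (hζsmooth : ContDiff ℝ (⊤ : ℕ∞) ζ) (hζsupp : HasCompactSupport ζ)
    (hζnn : ∀ y, 0 ≤ ζ y) (hζone : ∀ y ∈ B, ζ y = 1)
    (ρ : ℝ → ℝ) (hρnn : ∀ lam, 0 ≤ ρ lam) (hρbdd : ∃ Cρ : ℝ, ∀ lam, ρ lam ≤ Cρ)
    (hρ0 : Tendsto ρ (cocompact ℝ) (nhds 0))
    (hosc : ∀ (lam : ℝ) (f : ∀ j : Fin n, (Fin (dd j) → ℝ) → ℂ),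
      (∀ j, Measurable (f j)) → (∀ j y, ‖f j y‖ ≤ 1) →
      ‖∫ y : Fin d → ℝ,
          Complex.exp (Complex.I * lam * P y) * (∏ j, f j (ℓ j y)) * (ζ y : ℂ)‖
        ≤ ρ lam) :
    ∃ Θ : ℝ → ℝ, (∀ ε, 0 ≤ Θ ε) ∧
      Tendsto Θ (nhdsWithin 0 (Set.Ioi 0)) (nhds 0) ∧
      ∀ ε > (0 : ℝ), ∀ g : ∀ j : Fin n, (Fin (dd j) → ℝ) → ℝ, (∀ j, Measurable (g j)) →
        volume {y ∈ B | |P y - ∑ j, g j (ℓ j y)| < ε} ≤ ENNReal.ofReal (Θ ε) := by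
  obtain ⟨Cρ, hCρ⟩ := hρbdd
  set C : ℝ := Cρ + 1 with hCdef
  have hρC : ∀ lam, ρ lam ≤ C := fun lam => (hCρ lam).trans (by simp [hCdef])
  have hC0 : 0 < C := lt_of_le_of_lt (hρnn 0) (lt_of_le_of_lt (hCρ 0) (by simp [hCdef]))
  set r : ℝ → ℝ := rhoBar ρ with hrdef
  have hrnn : ∀ x, 0 ≤ r x := rhoBar_nonneg hρnn hρC
  have hrC : ∀ x, r x ≤ C := rhoBar_le hρC
  have hrm : Measurable r := rhoBar_measurable hρC
  have hρr : ∀ lam, ρ lam ≤ r lam := le_rhoBar hρC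
  have hrdecay : ∀ δ : ℝ, 0 < δ → ∃ M : ℝ, 0 < M ∧ ∀ lam : ℝ, M ≤ |lam| → r lam ≤ δ :=
    fun δ hδ => rhoBar_decay hρ0 hδ
  refine ⟨fun ε => if ε ≤ 0 then 0 else (5/4) * ε * ∫ lam in (-(1/ε))..(1/ε), r lam,
    ?_, theta_tendsto hrm hC0 hrnn hrC hrdecay, ?_⟩
  · intro ε
    by_cases h : ε ≤ 0
    · simp [h]
    · simp only [if_neg h]
      push_neg at h
      have : 0 ≤ ∫ lam in (-(1/ε))..(1/ε), r lam :=
        intervalIntegral.integral_nonneg (neg_le_self (by positivity))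
          (fun x _ => hrnn x)
      positivity
  · intro ε hε0 g hg
    simp only [if_neg (not_le.mpr hε0)]
    set L : ℝ := 1/ε with hLdef
    have hLpos : 0 < L := by positivity
    have hεL : ε * L = 1 := by rw [hLdef]; field_simp
    set t : (Fin d → ℝ) → ℝ := fun y => P y - ∑ j, g j (ℓ j y) with htdef
    have hℓc : ∀ j, Continuous (ℓ j) := fun j => (ℓ j).continuous_of_finiteDimensional
    have ht : Measurable t :=
      hP.sub (Finset.measurable_sum _ fun j _ => (hg j).comp (hℓc j).measurable)
    have hζc : Continuous ζ := hζsmooth.continuous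
    have hζint : Integrable ζ := hζc.integrable_of_hasCompactSupport hζsupp
    -- the oscillatory bound for the cosine integral
    have hT : ∀ lam : ℝ, |∫ y, Real.cos (lam * t y) * ζ y| ≤ ρ lam := by
      intro lam
      set f : ∀ j : Fin n, (Fin (dd j) → ℝ) → ℂ :=
        fun j x => Complex.exp (-(Complex.I * lam * g j x)) with hfdef
      have hfm : ∀ j, Measurable (f j) := fun j =>
        Complex.measurable_exp.comp
          (((Complex.measurable_ofReal.comp (hg j)).const_mul (Complex.I * lam)).neg)
      have hfle : ∀ j y, ‖f j y‖ ≤ 1 := by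
        intro j y
        rw [hfdef]
        simp only [Complex.norm_exp]
        simp [Complex.mul_re, Complex.I_re, Complex.I_im]
      have hkey := hosc lam f hfm hfle
      have hid : ∀ y : Fin d → ℝ,
          Complex.exp (Complex.I * lam * P y) * (∏ j, f j (ℓ j y)) * (ζ y : ℂ)
            = Complex.exp (Complex.I * lam * (t y : ℂ)) * (ζ y : ℂ) := by
        intro y
        have h1 : (∏ j, f j (ℓ j y))
            = Complex.exp (∑ j, -(Complex.I * lam * g j (ℓ j y))) := by
          rw [Complex.exp_sum]
        rw [h1, ← Complex.exp_add]
        congr 2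
        rw [htdef]
        push_cast
        rw [mul_sub, Finset.mul_sum, Finset.sum_neg_distrib, ← sub_eq_add_neg]
      rw [show (fun y => Complex.exp (Complex.I * lam * P y) * (∏ j, f j (ℓ j y)) * (ζ y : ℂ))
        = fun y => Complex.exp (Complex.I * lam * (t y : ℂ)) * (ζ y : ℂ) from funext hid] at hkey
      -- integrability of the complex integrand
      have hint : Integrable (fun y => Complex.exp (Complex.I * lam * (t y : ℂ)) * (ζ y : ℂ)) := by
        have hm : Measurable (fun y => Complex.exp (Complex.I * lam * (t y : ℂ)) * (ζ y : ℂ)) :=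
          (Complex.measurable_exp.comp
            ((Complex.measurable_ofReal.comp ht).const_mul (Complex.I * lam))).mul
            (Complex.measurable_ofReal.comp hζc.measurable)
        refine (hζc.integrable_of_hasCompactSupport hζsupp).mono' hm.aestronglyMeasurable ?_
        refine Eventually.of_forall fun y => ?_
        have h2 : ‖Complex.exp (Complex.I * lam * (t y : ℂ))‖ = 1 := by
          simp only [Complex.norm_exp]
          simp [Complex.mul_re, Complex.I_re, Complex.I_im]
        rw [norm_mul, h2, one_mul]
        simp [Complex.norm_real, Real.norm_eq_abs, abs_of_nonneg (hζnn y)]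
      have hre : (∫ y, Complex.exp (Complex.I * lam * (t y : ℂ)) * (ζ y : ℂ)).re
          = ∫ y, Real.cos (lam * t y) * ζ y := by
        have h0 := integral_re hint
        simp only [RCLike.re_to_complex] at h0
        rw [← h0]
        congr 1
        funext y
        have h3 : Complex.I * lam * (t y : ℂ) = ((lam * t y : ℝ) : ℂ) * Complex.I := by
          push_cast; ring
        rw [h3]
        simp only [Complex.mul_re, Complex.ofReal_im, Complex.ofReal_re, mul_zero, sub_zero,
          Complex.exp_ofReal_mul_I_re]
      calc |∫ y, Real.cos (lam * t y) * ζ y|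
          = |(∫ y, Complex.exp (Complex.I * lam * (t y : ℂ)) * (ζ y : ℂ)).re| := by rw [hre]
        _ ≤ ‖(∫ y, Complex.exp (Complex.I * lam * (t y : ℂ)) * (ζ y : ℂ))‖ :=
            Complex.abs_re_le_norm _
        _ ≤ ρ lam := hkey
    -- the sublevel set
    set E : Set (Fin d → ℝ) := {y ∈ B | |P y - ∑ j, g j (ℓ j y)| < ε} with hEdef
    have hEt : E = {y | y ∈ B ∧ |t y| < ε} := rfl
    have hEm : MeasurableSet E := by
      rw [hEt]
      exact hBm.inter (ht.abs measurableSet_Iio)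
    have hEfin : volume E ≠ ⊤ := by
      refine ne_top_of_le_ne_top hB.measure_lt_top.ne (measure_mono ?_)
      intro y hy; exact hy.1
    -- main chain
    have hker_meas : Measurable (fun y => kern L (t y)) := (kern_meas L).comp ht
    have hker_abs : ∀ y, |kern L (t y)| ≤ L := fun y => by
      rw [abs_of_nonneg (kern_nonneg hLpos _)]; exact kern_le hLpos _
    have step1 : (4/5) * L * (volume E).toReal ≤ ∫ y in E, kern L (t y) := by
      refine setIntegral_ge_of_const_le_real hEm hEfin ?_ ?_
      · intro y hy
        refine kern_ge hLpos ?_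
        have h1 : |t y| < ε := hy.2
        have := mul_lt_mul_of_pos_right h1 hLpos
        rw [hεL] at this
        exact this.le
      · refine Integrable.mono' (g := fun _ => L)
          (integrableOn_const hEfin)
          (hker_meas.aestronglyMeasurable.restrict) ?_
        exact Eventually.of_forall fun y => by
          simpa [Real.norm_eq_abs] using hker_abs y
    have step2 : (∫ y in E, kern L (t y)) = ∫ y in E, kern L (t y) * ζ y := by
      refine setIntegral_congr_fun hEm fun y hy => ?_
      rw [hζone y hy.1, mul_one]
    have hkerζ_int : Integrable (fun y => kern L (t y) * ζ y) :=
      aux_int_mul_zeta hζc hζsupp hζnn hker_meas hker_abs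
    have step3 : (∫ y in E, kern L (t y) * ζ y) ≤ ∫ y, kern L (t y) * ζ y := by
      refine setIntegral_le_integral hkerζ_int ?_
      exact Eventually.of_forall fun y => mul_nonneg (kern_nonneg hLpos _) (hζnn y)
    have step4 : (∫ y, kern L (t y) * ζ y) ≤ ∫ lam in (-L)..L, r lam := by
      set μ := volume.restrict (Set.Ioc (-L) L) with hμdef
      haveI hfinμ : IsFiniteMeasure μ :=
        ⟨by rw [hμdef, Measure.restrict_apply_univ]; exact measure_Ioc_lt_top⟩
      set F : ℝ → (Fin d → ℝ) → ℝ :=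
        fun lam y => ((1 - |lam|/L) * Real.cos (lam * t y)) * ζ y with hFdef
      have hFm : Measurable (Function.uncurry F) := by
        apply Measurable.mul
        · apply Measurable.mul
          · exact measurable_const.sub ((measurable_fst.abs).div_const L)
          · exact Real.continuous_cos.measurable.comp
              (measurable_fst.mul (ht.comp measurable_snd))
        · exact hζc.measurable.comp measurable_snd
      have hdom : Integrable (fun p : ℝ × (Fin d → ℝ) => (1:ℝ) * ζ p.2) (μ.prod volume) :=
        (integrable_const (1:ℝ)).mul_prod hζint
      have hae1 : ∀ᵐ (p : ℝ × (Fin d → ℝ)) ∂(μ.prod volume), p.1 ∈ Set.Ioc (-L) L := by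
        rw [MeasureTheory.ae_iff]
        have hset : {p : ℝ × (Fin d → ℝ) | ¬ p.1 ∈ Set.Ioc (-L) L}
            = (Set.Ioc (-L) L)ᶜ ×ˢ (Set.univ : Set (Fin d → ℝ)) := by
          ext p; simp [Set.mem_prod]
        rw [hset, Measure.prod_prod]
        have : μ ((Set.Ioc (-L) L)ᶜ) = 0 := by
          rw [hμdef, Measure.restrict_apply (measurableSet_Ioc.compl)]
          simp
        rw [this, zero_mul]
      have hFint : Integrable (Function.uncurry F) (μ.prod volume) := by
        refine hdom.mono' hFm.aestronglyMeasurable ?_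
        filter_upwards [hae1] with p hp
        have h1 : |p.1| ≤ L := abs_le.mpr ⟨le_of_lt hp.1, hp.2⟩
        have h2 : 0 ≤ 1 - |p.1|/L := by
          rw [sub_nonneg, div_le_one hLpos]; exact h1
        have h3 : 1 - |p.1|/L ≤ 1 := by
          have : 0 ≤ |p.1|/L := by positivity
          linarith
        have hcos : |Real.cos (p.1 * t p.2)| ≤ 1 := Real.abs_cos_le_one _
        show ‖((1 - |p.1|/L) * Real.cos (p.1 * t p.2)) * ζ p.2‖ ≤ 1 * ζ p.2
        rw [Real.norm_eq_abs, abs_mul, abs_mul, abs_of_nonneg h2, abs_of_nonneg (hζnn p.2)]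
        have : (1 - |p.1|/L) * |Real.cos (p.1 * t p.2)| ≤ 1 :=
          le_trans (mul_le_mul_of_nonneg_left hcos h2) (by linarith)
        nlinarith [hζnn p.2]
      have hswap := integral_integral_swap (f := F) hFint
      have hinner_lam : ∀ y, (∫ lam, F lam y ∂μ) = kern L (t y) * ζ y := by
        intro y
        have e1 : (∫ lam, F lam y ∂μ)
            = ∫ lam in (-L)..L, ((1 - |lam|/L) * Real.cos (lam * t y)) * ζ y := by
          rw [hμdef, intervalIntegral.integral_of_le (by linarith : -L ≤ L)]
        rw [e1, intervalIntegral.integral_mul_const, kern_integral hLpos]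
      have lhs_eq : (∫ y, kern L (t y) * ζ y) = ∫ lam, (∫ y, F lam y) ∂μ := by
        rw [hswap]
        congr 1
        funext y
        exact (hinner_lam y).symm
      have hmarg : Integrable (fun lam => ∫ y, F lam y) μ := hFint.integral_prod_left
      have hr_int : IntegrableOn r (Set.Ioc (-L) L) volume := by
        have := aux_ii hrm (C := max C 0)
          (fun x => by rw [abs_of_nonneg (hrnn x)]; exact le_max_of_le_left (hrC x)) (-L) L
        rw [intervalIntegrable_iff_integrableOn_Ioc_of_le (by linarith : -L ≤ L)] at this
        exact this
      have hmono : (∫ lam, (∫ y, F lam y) ∂μ) ≤ ∫ lam, r lam ∂μ := by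
        rw [hμdef]
        refine setIntegral_mono_on hmarg hr_int measurableSet_Ioc ?_
        intro lam hlam
        have h1 : |lam| ≤ L := abs_le.mpr ⟨le_of_lt hlam.1, hlam.2⟩
        have h2 : 0 ≤ 1 - |lam|/L := by rw [sub_nonneg, div_le_one hLpos]; exact h1
        have h3 : 1 - |lam|/L ≤ 1 := by
          have : 0 ≤ |lam|/L := by positivity
          linarith
        have e2 : (∫ y, F lam y) = (1 - |lam|/L) * ∫ y, Real.cos (lam * t y) * ζ y := by
          rw [← MeasureTheory.integral_const_mul]
          congr 1
          funext y
          rw [hFdef]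
          ring
        rw [e2]
        have hTle : (∫ y, Real.cos (lam * t y) * ζ y) ≤ ρ lam :=
          le_trans (le_abs_self _) (hT lam)
        calc (1 - |lam|/L) * ∫ y, Real.cos (lam * t y) * ζ y
            ≤ (1 - |lam|/L) * ρ lam := mul_le_mul_of_nonneg_left hTle h2
          _ ≤ 1 * ρ lam := mul_le_mul_of_nonneg_right h3 (hρnn lam)
          _ ≤ r lam := by rw [one_mul]; exact hρr lam
      rw [intervalIntegral.integral_of_le (by linarith : -L ≤ L)]
      calc (∫ y, kern L (t y) * ζ y) = ∫ lam, (∫ y, F lam y) ∂μ := lhs_eq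
        _ ≤ ∫ lam, r lam ∂μ := hmono
        _ = ∫ lam in Set.Ioc (-L) L, r lam := by rw [hμdef]
    have key : (volume E).toReal ≤ (5/4) * ε * ∫ lam in (-L)..L, r lam := by
      have h1 : (4/5) * L * (volume E).toReal ≤ ∫ lam in (-L)..L, r lam := by
        calc (4/5) * L * (volume E).toReal ≤ ∫ y in E, kern L (t y) := step1
          _ = ∫ y in E, kern L (t y) * ζ y := step2
          _ ≤ ∫ y, kern L (t y) * ζ y := step3
          _ ≤ ∫ lam in (-L)..L, r lam := step4
      nlinarith [ENNReal.toReal_nonneg (a := volume E), hεL,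
        mul_le_mul_of_nonneg_left h1 (by positivity : (0:ℝ) ≤ (5/4) * ε)]
    refine (ENNReal.le_ofReal_iff_toReal_le hEfin ?_).mpr key
    have : 0 ≤ ∫ lam in (-L)..L, r lam :=
      intervalIntegral.integral_nonneg (by linarith) (fun x _ => hrnn x)
    positivity
end

section
/- Let N be a positive integer and let v_1, …, v_N ∈ ℝ³ satisfy (v_j^3)² = (v_j^1)² + (v_j^2)² for all j, where v_j = (v_j^1, v_j^2, v_j^3). Define P(x₁, x₂, x₃) = x₃². Then for any twice continuously differentiable functions f_1, …, f_N : ℝ → ℝ, the function x ↦ P(x) − Σ_{j=1}^N f_j(x·v_j) is not identically zero on ℝ³. In particular P is nondegenerate relative to the linear functionals x ↦ x·v_j. -/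
lemma stmt15_key (N : ℕ) (f : Fin N → ℝ → ℝ) (hf : ∀ j, ContDiff ℝ 2 (f j))
    (c : Fin N → ℝ) (K : ℝ) (h : ∀ t : ℝ, ∑ j, f j (t * c j) = K * t ^ 2) :
    ∑ j, (c j) ^ 2 * deriv (deriv (f j)) 0 = 2 * K := by
  have hdiff : ∀ j, Differentiable ℝ (f j) := fun j =>
    (hf j).differentiable (by norm_num)
  have hd1 : ∀ j, ContDiff ℝ 1 (deriv (f j)) := by
    intro j
    have := (hf j).of_le (show (2:WithTop ℕ∞) ≤ 1 + 1 by norm_num)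
    exact (contDiff_succ_iff_deriv.mp this).2.2
  have hdiff' : ∀ j, Differentiable ℝ (deriv (f j)) := fun j =>
    (hd1 j).differentiable (by norm_num)
  -- derivative of F
  have hF : ∀ t : ℝ, HasDerivAt (fun s : ℝ => ∑ j, f j (s * c j))
      (∑ j, deriv (f j) (t * c j) * c j) t := by
    intro t
    apply HasDerivAt.fun_sum
    intro j _
    simpa [Function.comp_def] using ((hdiff j).differentiableAt.hasDerivAt).comp t
      ((hasDerivAt_id t).mul_const (c j))
  have hFeq : (fun s : ℝ => ∑ j, f j (s * c j)) = fun s : ℝ => K * s ^ 2 :=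
    funext h
  have hG : ∀ t : ℝ, deriv (fun s : ℝ => ∑ j, f j (s * c j)) t
      = ∑ j, deriv (f j) (t * c j) * c j := fun t => (hF t).deriv
  have hG2 : ∀ t : ℝ, (∑ j, deriv (f j) (t * c j) * c j) = K * (2 * t) := by
    intro t
    rw [← hG t, hFeq]
    have : HasDerivAt (fun s : ℝ => K * s ^ 2) (K * (2 * t)) t := by
      simpa [mul_comm, mul_assoc] using ((hasDerivAt_pow 2 t).const_mul K)
    simpa using this.deriv
  -- derivative of G at 0
  have hH : HasDerivAt (fun s : ℝ => ∑ j, deriv (f j) (s * c j) * c j)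
      (∑ j, deriv (deriv (f j)) (0 * c j) * c j * c j) 0 := by
    apply HasDerivAt.fun_sum
    intro j _
    simpa using (((hdiff' j).differentiableAt.hasDerivAt).comp 0
      ((hasDerivAt_id 0).mul_const (c j))).mul_const (c j)
  have hHeq : (fun s : ℝ => ∑ j, deriv (f j) (s * c j) * c j)
      = fun s : ℝ => K * (2 * s) := funext hG2
  have h2 : deriv (fun s : ℝ => K * (2 * s)) 0
      = ∑ j, deriv (deriv (f j)) (0 * c j) * c j * c j := by
    rw [← hHeq]; exact hH.deriv
  have h3 : deriv (fun s : ℝ => K * (2 * s)) 0 = 2 * K := by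
    have : HasDerivAt (fun s : ℝ => K * (2 * s)) (2 * K) 0 := by
      simpa [mul_comm, mul_assoc, mul_left_comm] using ((hasDerivAt_id (0:ℝ)).const_mul (2*K))
    exact this.deriv
  rw [← h3, h2]
  apply Finset.sum_congr rfl
  intro j _
  simp [pow_two]
  ring

/-- If the vectors `v_1, …, v_N ∈ ℝ³` lie on the light cone
`(v^3)² = (v^1)² + (v^2)²`, then `P(x) = x₃²` cannot be written as `Σ_j f_j(x·v_j)` with all
`f_j` twice continuously differentiable: the difference is not identically zero. Hence `P` is
nondegenerate relative to the functionals `x ↦ x·v_j`. -/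
theorem stmt15 (N : ℕ) (hN : 0 < N) (v : Fin N → (Fin 3 → ℝ))
    (hcone : ∀ j, (v j 2) ^ 2 = (v j 0) ^ 2 + (v j 1) ^ 2)
    (f : Fin N → (ℝ → ℝ)) (hf : ∀ j, ContDiff ℝ 2 (f j)) :
    ¬ ∀ x : Fin 3 → ℝ, (x 2) ^ 2 - ∑ j, f j (∑ i, x i * v j i) = 0 := by
  intro h
  -- specialize along the coordinate directions
  have key : ∀ (i : Fin 3) (K : ℝ),
      (∀ t : ℝ, ((if i = 2 then t else 0) : ℝ) ^ 2 = K * t ^ 2) →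
      (∀ t : ℝ, ∑ j, f j (t * v j i) = ∑ j, f j (t * v j i)) → True := fun _ _ _ _ => trivial
  have hA : ∑ j, (v j 0) ^ 2 * deriv (deriv (f j)) 0 = 2 * 0 := by
    apply stmt15_key N f hf (fun j => v j 0) 0
    intro t
    have := h (fun i => if i = 0 then t else 0)
    simp [Fin.sum_univ_three] at this
    linarith [this]
  have hB : ∑ j, (v j 1) ^ 2 * deriv (deriv (f j)) 0 = 2 * 0 := by
    apply stmt15_key N f hf (fun j => v j 1) 0
    intro t
    have := h (fun i => if i = 1 then t else 0)
    simp [Fin.sum_univ_three] at this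
    linarith [this]
  have hC : ∑ j, (v j 2) ^ 2 * deriv (deriv (f j)) 0 = 2 * 1 := by
    apply stmt15_key N f hf (fun j => v j 2) 1
    intro t
    have := h (fun i => if i = 2 then t else 0)
    simp [Fin.sum_univ_three] at this
    linarith [this]
  have : ∑ j, (v j 2) ^ 2 * deriv (deriv (f j)) 0
      = ∑ j, (v j 0) ^ 2 * deriv (deriv (f j)) 0
        + ∑ j, (v j 1) ^ 2 * deriv (deriv (f j)) 0 := by
    rw [← Finset.sum_add_distrib]
    apply Finset.sum_congr rfl
    intro j _
    rw [hcone j]; ring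
  rw [hA, hB, hC] at this
  norm_num at this
end
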